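/- Four-completion characterization for the three-candidate cup with partial votes: over candidates {A,B,C}, fix a family of declared voters with positive integer weights and fixed votes, together with undeclared voters with positive integer weights whose votes are completely unknown; assume the total weight is odd. Consider the cup rule with agenda ((A vs B), then C). Then: A is the cup winner in some assignment of votes to the undeclared voters if and only if A is the cup winner when every undeclared voter votes A>B>C; B is the cup winner in some assignment if and only if B is the cup winner when every undeclared voter votes B>A>C; and C is the cup winner in some assignment if and only if C is the cup winner when every undeclared voter votes C>A>B or C is the cup winner when every undeclared voter votes C>B>A. Consequently, the cup winner is the same in all assignments if and only if the same candidate wins in these four specific assignments. -/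

import Mathlib

/-!
With an odd total weight every pair of candidates has a strict majority winner, so each way
of winning the cup is a conjunction of pairwise victories: `A` wins iff it beats `B` and `C`,
`B` wins iff it beats `A` and `C`, and `C` wins iff it beats the winner of `A` vs `B`.
Since the total weight is fixed, moving every undeclared voter to a ballot ranking `x` above
`y` can only help `x` against `y`. Hence a conjunction holding under some assignment also
holds when all undeclared voters cast the one ballot ranking every required pairwise winner
on top: `A>B>C`, `B>A>C`, and `C>A>B` or `C>B>A`. Each winner under any assignment thus
wins under one of these four, which gives the last equivalence.
-/

namespace Stmt12

inductive Cand where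
  | A | B | C
deriving DecidableEq

open Cand

/-- `above l x y` : in the vote given by list `l` (best candidate first),
`x` is ranked above `y`. -/
def above (l : List Cand) (x y : Cand) : Prop := l.idxOf x < l.idxOf y

instance (l : List Cand) (x y : Cand) : Decidable (above l x y) :=
  inferInstanceAs (Decidable (_ < _))

/-- Total weight of voters ranking `x` above `y`: declared voters vote `P`,
undeclared voters vote `Q`. -/
def N {V₁ V₂ : Type*} [Fintype V₁] [Fintype V₂]
    (w₁ : V₁ → ℕ) (P : V₁ → List Cand) (w₂ : V₂ → ℕ) (Q : V₂ → List Cand)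
    (x y : Cand) : ℕ :=
  (∑ v, if above (P v) x y then w₁ v else 0)
  + ∑ v, if above (Q v) x y then w₂ v else 0

/-- Winner of the cup with agenda ((A vs B), then C). -/
def cupWinner (N : Cand → Cand → ℕ) : Cand :=
  let w1 := if N A B > N B A then A else B
  if N w1 C > N C w1 then w1 else C

def Beats (M : Cand → Cand → ℕ) (x y : Cand) : Prop := M y x < M x y

def IsTournament (M : Cand → Cand → ℕ) : Prop :=
  ∀ x y, x ≠ y → (Beats M x y ↔ ¬ Beats M y x)

lemma not_beats_self (M : Cand → Cand → ℕ) (x : Cand) : ¬ Beats M x x :=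
  lt_irrefl _

lemma cupWinner_eq_A_iff (M : Cand → Cand → ℕ) :
    cupWinner M = A ↔ Beats M A B ∧ Beats M A C := by
  unfold Beats
  dsimp only [cupWinner]
  split_ifs <;> simp_all

lemma IsTournament.cupWinner_eq_B_iff {M : Cand → Cand → ℕ} (hM : IsTournament M) :
    cupWinner M = B ↔ Beats M B A ∧ Beats M B C := by
  have hAB := hM B A (by decide)
  unfold Beats at hAB ⊢
  dsimp only [cupWinner]
  split_ifs <;> simp_all

lemma IsTournament.cupWinner_eq_C_iff {M : Cand → Cand → ℕ} (hM : IsTournament M) :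
    cupWinner M = C ↔ (Beats M A B ∧ Beats M C A) ∨ (Beats M B A ∧ Beats M C B) := by
  have hAB := hM B A (by decide)
  have hAC := hM C A (by decide)
  have hBC := hM C B (by decide)
  unfold Beats at hAB hAC hBC ⊢
  dsimp only [cupWinner]
  split_ifs <;> simp_all

lemma above_or_above {l : List Cand} (hl : l.Perm [A, B, C]) {x y : Cand} (hxy : x ≠ y) :
    above l x y ∨ above l y x := by
  have hmem := List.mem_permutations'.2 hl
  clear hl
  revert l
  cases x <;> cases y <;> first | exact absurd rfl hxy | decide

lemma above_asymm {l : List Cand} {x y : Cand} (h : above l x y) : ¬ above l y x :=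
  lt_asymm h

section Profile

variable {V₁ V₂ : Type*} [Fintype V₁] [Fintype V₂]
  {w₁ : V₁ → ℕ} {w₂ : V₂ → ℕ} {P : V₁ → List Cand} {Q Q' : V₂ → List Cand} {x y : Cand}

lemma sum_above_add_sum_above {V : Type*} [Fintype V] (w : V → ℕ) {R : V → List Cand}
    (hR : ∀ v, (R v).Perm [A, B, C]) (hxy : x ≠ y) :
    (∑ v, if above (R v) x y then w v else 0)
      + (∑ v, if above (R v) y x then w v else 0) = ∑ v, w v := by
  rw [← Finset.sum_add_distrib]
  refine Finset.sum_congr rfl fun v _ => ?_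
  rcases above_or_above (hR v) hxy with h | h <;> simp [h, above_asymm h]

lemma N_add_N_swap (hP : ∀ v, (P v).Perm [A, B, C]) (hQ : ∀ v, (Q v).Perm [A, B, C])
    (hxy : x ≠ y) :
    N w₁ P w₂ Q x y + N w₁ P w₂ Q y x = ∑ v, w₁ v + ∑ v, w₂ v := by
  rw [N, N, add_add_add_comm, sum_above_add_sum_above w₁ hP hxy,
    sum_above_add_sum_above w₂ hQ hxy]

lemma isTournament_N (hP : ∀ v, (P v).Perm [A, B, C]) (hQ : ∀ v, (Q v).Perm [A, B, C])
    (hodd : Odd (∑ v, w₁ v + ∑ v, w₂ v)) : IsTournament (N w₁ P w₂ Q) := by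
  intro x y hxy
  have hsum := N_add_N_swap (w₁ := w₁) (w₂ := w₂) hP hQ hxy
  obtain ⟨k, hk⟩ := hodd
  unfold Beats
  omega

lemma N_le_N_of_above_imp (h : ∀ v, above (Q v) x y → above (Q' v) x y) :
    N w₁ P w₂ Q x y ≤ N w₁ P w₂ Q' x y := by
  refine Nat.add_le_add_left (Finset.sum_le_sum fun v _ => ?_) _
  by_cases hv : above (Q v) x y
  · simp [hv, h v hv]
  · simp [hv]

lemma Beats.mono (hP : ∀ v, (P v).Perm [A, B, C]) (hQ : ∀ v, (Q v).Perm [A, B, C])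
    (hQ' : ∀ v, (Q' v).Perm [A, B, C]) (h : ∀ v, above (Q v) x y → above (Q' v) x y)
    (hxy : Beats (N w₁ P w₂ Q) x y) : Beats (N w₁ P w₂ Q') x y := by
  rcases eq_or_ne x y with rfl | hne
  · exact absurd hxy (not_beats_self _ _)
  have hsum := N_add_N_swap (w₁ := w₁) (w₂ := w₂) hP hQ hne
  have hsum' := N_add_N_swap (w₁ := w₁) (w₂ := w₂) hP hQ' hne
  have hle := N_le_N_of_above_imp (w₁ := w₁) (w₂ := w₂) (P := P) h
  unfold Beats at hxy ⊢
  omega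

lemma Beats.const (hP : ∀ v, (P v).Perm [A, B, C]) (hQ : ∀ v, (Q v).Perm [A, B, C])
    {l : List Cand} (hl : l.Perm [A, B, C]) (hlxy : above l x y)
    (hxy : Beats (N w₁ P w₂ Q) x y) : Beats (N w₁ P w₂ fun _ => l) x y :=
  hxy.mono hP hQ (fun _ => hl) fun _ _ => hlxy

lemma exists_cupWinner_eq_A_iff (hP : ∀ v, (P v).Perm [A, B, C]) :
    (∃ Q : V₂ → List Cand, (∀ v, (Q v).Perm [A, B, C]) ∧ cupWinner (N w₁ P w₂ Q) = A)
      ↔ cupWinner (N w₁ P w₂ fun _ => [A, B, C]) = A := by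
  refine ⟨fun ⟨Q, hQ, hA⟩ => ?_, fun hA => ⟨_, fun _ => List.Perm.refl _, hA⟩⟩
  rw [cupWinner_eq_A_iff] at hA ⊢
  exact ⟨hA.1.const hP hQ (by decide) (by decide), hA.2.const hP hQ (by decide) (by decide)⟩

lemma exists_cupWinner_eq_B_iff (hP : ∀ v, (P v).Perm [A, B, C])
    (hodd : Odd (∑ v, w₁ v + ∑ v, w₂ v)) :
    (∃ Q : V₂ → List Cand, (∀ v, (Q v).Perm [A, B, C]) ∧ cupWinner (N w₁ P w₂ Q) = B)
      ↔ cupWinner (N w₁ P w₂ fun _ => [B, A, C]) = B := by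
  refine ⟨fun ⟨Q, hQ, hB⟩ => ?_, fun hB => ⟨_, fun _ => by decide, hB⟩⟩
  rw [(isTournament_N hP hQ hodd).cupWinner_eq_B_iff] at hB
  rw [(isTournament_N hP (fun _ => by decide) hodd).cupWinner_eq_B_iff]
  exact ⟨hB.1.const hP hQ (by decide) (by decide), hB.2.const hP hQ (by decide) (by decide)⟩

lemma exists_cupWinner_eq_C_iff (hP : ∀ v, (P v).Perm [A, B, C])
    (hodd : Odd (∑ v, w₁ v + ∑ v, w₂ v)) :
    (∃ Q : V₂ → List Cand, (∀ v, (Q v).Perm [A, B, C]) ∧ cupWinner (N w₁ P w₂ Q) = C)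
      ↔ (cupWinner (N w₁ P w₂ fun _ => [C, A, B]) = C ∨
         cupWinner (N w₁ P w₂ fun _ => [C, B, A]) = C) := by
  refine ⟨fun ⟨Q, hQ, hC⟩ => ?_, ?_⟩
  · rw [(isTournament_N hP hQ hodd).cupWinner_eq_C_iff] at hC
    rw [(isTournament_N hP (fun _ => by decide) hodd).cupWinner_eq_C_iff,
      (isTournament_N hP (fun _ => by decide) hodd).cupWinner_eq_C_iff]
    rcases hC with ⟨hAB, hCA⟩ | ⟨hBA, hCB⟩
    · exact .inl (.inl ⟨hAB.const hP hQ (by decide) (by decide),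
        hCA.const hP hQ (by decide) (by decide)⟩)
    · exact .inr (.inr ⟨hBA.const hP hQ (by decide) (by decide),
        hCB.const hP hQ (by decide) (by decide)⟩)
  · rintro (hC | hC)
    exacts [⟨_, fun _ => by decide, hC⟩, ⟨_, fun _ => by decide, hC⟩]

lemma forall_cupWinner_eq_iff (hP : ∀ v, (P v).Perm [A, B, C])
    (hodd : Odd (∑ v, w₁ v + ∑ v, w₂ v)) :
    (∀ Q Q' : V₂ → List Cand, (∀ v, (Q v).Perm [A, B, C]) → (∀ v, (Q' v).Perm [A, B, C]) →
        cupWinner (N w₁ P w₂ Q) = cupWinner (N w₁ P w₂ Q'))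
      ↔ (cupWinner (N w₁ P w₂ fun _ => [A, B, C]) = cupWinner (N w₁ P w₂ fun _ => [B, A, C]) ∧
         cupWinner (N w₁ P w₂ fun _ => [B, A, C]) = cupWinner (N w₁ P w₂ fun _ => [C, A, B]) ∧
         cupWinner (N w₁ P w₂ fun _ => [C, A, B]) = cupWinner (N w₁ P w₂ fun _ => [C, B, A])) := by
  refine ⟨fun h => ⟨h _ _ (fun _ => by decide) (fun _ => by decide),
    h _ _ (fun _ => by decide) (fun _ => by decide),
    h _ _ (fun _ => by decide) (fun _ => by decide)⟩, fun ⟨e₁, e₂, e₃⟩ => ?_⟩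
  suffices key : ∀ Q : V₂ → List Cand, (∀ v, (Q v).Perm [A, B, C]) →
      cupWinner (N w₁ P w₂ Q) = cupWinner (N w₁ P w₂ fun _ => [A, B, C]) from
    fun Q Q' hQ hQ' => (key Q hQ).trans (key Q' hQ').symm
  intro Q hQ
  rcases hW : cupWinner (N w₁ P w₂ Q) with _ | _ | _
  · exact ((exists_cupWinner_eq_A_iff hP).1 ⟨Q, hQ, hW⟩).symm
  · exact (e₁.trans ((exists_cupWinner_eq_B_iff hP hodd).1 ⟨Q, hQ, hW⟩)).symm
  · rcases (exists_cupWinner_eq_C_iff hP hodd).1 ⟨Q, hQ, hW⟩ with hC | hC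
    · exact (e₁.trans (e₂.trans hC)).symm
    · exact (e₁.trans (e₂.trans (e₃.trans hC))).symm

end Profile

theorem coarse_elicitation_four_completions_general {V₁ V₂ : Type*} [Fintype V₁] [Fintype V₂]
    (w₁ : V₁ → ℕ)
    (w₂ : V₂ → ℕ)
    (P : V₁ → List Cand) (hP : ∀ v, (P v).Perm [A, B, C])
    (hodd : Odd (∑ v, w₁ v + ∑ v, w₂ v)) :
    ((∃ Q : V₂ → List Cand, (∀ v, (Q v).Perm [A, B, C]) ∧
        cupWinner (N w₁ P w₂ Q) = A)
      ↔ cupWinner (N w₁ P w₂ (fun _ => [A, B, C])) = A)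
    ∧
    ((∃ Q : V₂ → List Cand, (∀ v, (Q v).Perm [A, B, C]) ∧
        cupWinner (N w₁ P w₂ Q) = B)
      ↔ cupWinner (N w₁ P w₂ (fun _ => [B, A, C])) = B)
    ∧
    ((∃ Q : V₂ → List Cand, (∀ v, (Q v).Perm [A, B, C]) ∧
        cupWinner (N w₁ P w₂ Q) = C)
      ↔ (cupWinner (N w₁ P w₂ (fun _ => [C, A, B])) = C ∨
         cupWinner (N w₁ P w₂ (fun _ => [C, B, A])) = C))
    ∧
    ((∀ Q Q' : V₂ → List Cand,
        (∀ v, (Q v).Perm [A, B, C]) → (∀ v, (Q' v).Perm [A, B, C]) →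
        cupWinner (N w₁ P w₂ Q) = cupWinner (N w₁ P w₂ Q'))
      ↔ (cupWinner (N w₁ P w₂ (fun _ => [A, B, C])) =
           cupWinner (N w₁ P w₂ (fun _ => [B, A, C])) ∧
         cupWinner (N w₁ P w₂ (fun _ => [B, A, C])) =
           cupWinner (N w₁ P w₂ (fun _ => [C, A, B])) ∧
         cupWinner (N w₁ P w₂ (fun _ => [C, A, B])) =
           cupWinner (N w₁ P w₂ (fun _ => [C, B, A])))) :=
  ⟨exists_cupWinner_eq_A_iff hP, exists_cupWinner_eq_B_iff hP hodd,
    exists_cupWinner_eq_C_iff hP hodd, forall_cupWinner_eq_iff hP hodd⟩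

theorem coarse_elicitation_four_completions {V₁ V₂ : Type*} [Fintype V₁] [Fintype V₂]
    (w₁ : V₁ → ℕ) (hw₁ : ∀ v, 0 < w₁ v)
    (w₂ : V₂ → ℕ) (hw₂ : ∀ v, 0 < w₂ v)
    (P : V₁ → List Cand) (hP : ∀ v, (P v).Perm [A, B, C])
    (hodd : Odd (∑ v, w₁ v + ∑ v, w₂ v)) :
    ((∃ Q : V₂ → List Cand, (∀ v, (Q v).Perm [A, B, C]) ∧
        cupWinner (N w₁ P w₂ Q) = A)
      ↔ cupWinner (N w₁ P w₂ (fun _ => [A, B, C])) = A)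
    ∧
    ((∃ Q : V₂ → List Cand, (∀ v, (Q v).Perm [A, B, C]) ∧
        cupWinner (N w₁ P w₂ Q) = B)
      ↔ cupWinner (N w₁ P w₂ (fun _ => [B, A, C])) = B)
    ∧
    ((∃ Q : V₂ → List Cand, (∀ v, (Q v).Perm [A, B, C]) ∧
        cupWinner (N w₁ P w₂ Q) = C)
      ↔ (cupWinner (N w₁ P w₂ (fun _ => [C, A, B])) = C ∨
         cupWinner (N w₁ P w₂ (fun _ => [C, B, A])) = C))
    ∧
    ((∀ Q Q' : V₂ → List Cand,
        (∀ v, (Q v).Perm [A, B, C]) → (∀ v, (Q' v).Perm [A, B, C]) →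
        cupWinner (N w₁ P w₂ Q) = cupWinner (N w₁ P w₂ Q'))
      ↔ (cupWinner (N w₁ P w₂ (fun _ => [A, B, C])) =
           cupWinner (N w₁ P w₂ (fun _ => [B, A, C])) ∧
         cupWinner (N w₁ P w₂ (fun _ => [B, A, C])) =
           cupWinner (N w₁ P w₂ (fun _ => [C, A, B])) ∧
         cupWinner (N w₁ P w₂ (fun _ => [C, A, B])) =
           cupWinner (N w₁ P w₂ (fun _ => [C, B, A])))) :=
  coarse_elicitation_four_completions_general w₁ w₂ P hP hodd

end Stmt12
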